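/- arXiv:0903.0298 — 5 statements merged into one kernel-verified Lean document; each statement's English description precedes it below -/
import Mathlib

section
/- Let φ : ℝ → ℝ be a bijective function homogeneous in the 0-limit with associated triple (1, d₀, s ↦ φ̄₀·s^[d₀]) where φ̄₀ ≠ 0 and d₀ > 0. Then the inverse function φ⁻¹ is homogeneous in the 0-limit with associated triple (1, 1/d₀, s ↦ (s/φ̄₀)^[1/d₀]). -/
/-!
For `μ > 0` the rescaled map `φ_μ x = φ (μ x) / μ ^ d₀` has inverse `y ↦ φ⁻¹ (μ ^ d₀ y) / μ`, and
`φ_μ → g = c₀ · (·)^[d₀]` uniformly on compact subsets of `ℝ ∖ {0}`. So it suffices that inverting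
a continuous injection of `ℝ` is locally uniformly continuous: if `f` is uniformly close to `g`
near `g⁻¹ '' C`, then for `y ∈ C` the value `y` lies between `f (g⁻¹ y - r)` and
`f (g⁻¹ y + r)`, so by the intermediate value theorem and injectivity `f⁻¹ y` is `r`-close to
`g⁻¹ y`.
-/

noncomputable def sgnPow (w r : ℝ) : ℝ := Real.sign w * |w| ^ r

/-- Scalar version: `ζ : ℝ → ℝ` is homogeneous in the 0-limit with triple `(r, d, ζ₀)`. -/
def Homog0S (r d : ℝ) (ζ ζ₀ : ℝ → ℝ) : Prop :=
  Continuous ζ ∧ Continuous ζ₀ ∧ ζ₀ ≠ 0 ∧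
    ∀ C : Set ℝ, IsCompact C → (0:ℝ) ∉ C →
      ∀ ε > (0:ℝ), ∃ l₀ > (0:ℝ), ∀ s ∈ C, ∀ l : ℝ, 0 < l → l ≤ l₀ →
        |ζ (l ^ r * s) / l ^ d - ζ₀ s| ≤ ε

open Set Function

lemma sgnPow_zero_left (r : ℝ) : sgnPow 0 r = 0 := by simp [sgnPow]

lemma sgnPow_one_right (x : ℝ) : sgnPow x 1 = x := by
  rcases lt_trichotomy x 0 with hx | rfl | hx <;>
    simp [sgnPow, Real.sign_of_neg, Real.sign_of_pos, abs_of_neg, abs_of_pos, *]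

lemma sgnPow_of_pos {x : ℝ} (r : ℝ) (hx : 0 < x) : sgnPow x r = x ^ r := by
  simp [sgnPow, Real.sign_of_pos hx, abs_of_pos hx]

lemma sgnPow_of_neg {x : ℝ} (r : ℝ) (hx : x < 0) : sgnPow x r = -(-x) ^ r := by
  simp [sgnPow, Real.sign_of_neg hx, abs_of_neg hx]

lemma sgnPow_sgnPow (x a b : ℝ) : sgnPow (sgnPow x a) b = sgnPow x (a * b) := by
  rcases lt_trichotomy x 0 with hx | rfl | hx
  · have hpos : 0 < (-x) ^ a := Real.rpow_pos_of_pos (neg_pos.2 hx) a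
    rw [sgnPow_of_neg a hx, sgnPow_of_neg b (neg_neg_of_pos hpos), sgnPow_of_neg _ hx, neg_neg,
      ← Real.rpow_mul (neg_nonneg.2 hx.le)]
  · simp [sgnPow_zero_left]
  · rw [sgnPow_of_pos a hx, sgnPow_of_pos b (Real.rpow_pos_of_pos hx a), sgnPow_of_pos _ hx,
      ← Real.rpow_mul hx.le]

lemma sgnPow_eq_max_sub_max {r : ℝ} (hr : 0 < r) (x : ℝ) :
    sgnPow x r = max x 0 ^ r - max (-x) 0 ^ r := by
  rcases lt_trichotomy x 0 with hx | rfl | hx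
  · simp [sgnPow_of_neg r hx, hx.le, Real.zero_rpow hr.ne']
  · simp [sgnPow_zero_left, Real.zero_rpow hr.ne']
  · simp [sgnPow_of_pos r hx, hx.le, Real.zero_rpow hr.ne']

lemma continuous_sgnPow {r : ℝ} (hr : 0 < r) : Continuous (sgnPow · r) := by
  simp_rw [sgnPow_eq_max_sub_max hr]
  exact ((continuous_id.max continuous_const).rpow_const fun _ => Or.inr hr.le).sub
    ((continuous_neg.max continuous_const).rpow_const fun _ => Or.inr hr.le)

lemma leftInverse_mul_sgnPow_sgnPow_div {c d : ℝ} (hc : c ≠ 0) (hd : d ≠ 0) :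
    LeftInverse (fun s => c * sgnPow s d) (fun s => sgnPow (s / c) (1 / d)) := fun s => by
  simp [sgnPow_sgnPow, hd, sgnPow_one_right, mul_div_cancel₀ _ hc]

lemma leftInverse_sgnPow_div_mul_sgnPow {c d : ℝ} (hc : c ≠ 0) (hd : d ≠ 0) :
    LeftInverse (fun s => sgnPow (s / c) (1 / d)) (fun s => c * sgnPow s d) := fun s => by
  simp [sgnPow_sgnPow, hd, sgnPow_one_right, hc]

section ContinuousInjective

variable {f : ℝ → ℝ}

lemma Continuous.apply_mem_uIcc_iff (hf : Continuous f) (hf_inj : Injective f) {a b x : ℝ}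
    (hab : a ≤ b) : f x ∈ uIcc (f a) (f b) ↔ x ∈ Icc a b := by
  refine ⟨fun hx => ?_, fun hx => ?_⟩
  · obtain ⟨x', hx', hfx'⟩ := intermediate_value_uIcc hf.continuousOn hx
    rwa [uIcc_of_le hab, hf_inj hfx'] at hx'
  · rcases hf.strictMono_of_inj hf_inj with hmono | hanti
    · exact Icc_subset_uIcc (hmono.monotone.mapsTo_Icc hx)
    · exact Icc_subset_uIcc' (hanti.antitone.mapsTo_Icc hx)

lemma Continuous.continuous_invFun (hf : Continuous f) (hf_bij : Bijective f) :
    Continuous (invFun f) := by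
  have hinv : RightInverse (invFun f) f := rightInverse_invFun hf_bij.2
  have hsurj : Surjective (invFun f) := (leftInverse_invFun hf_bij.1).surjective
  rcases hf.strictMono_of_inj hf_bij.1 with hmono | hanti
  · refine Monotone.continuous_of_surjective (fun a b hab => ?_) hsurj
    rwa [← hmono.le_iff_le, hinv, hinv]
  · refine continuous_ofDual.comp
      (Monotone.continuous_of_surjective (f := OrderDual.toDual ∘ invFun f) (fun a b hab => ?_)
        (OrderDual.toDual.surjective.comp hsurj))
    change invFun f b ≤ invFun f a
    rwa [← hanti.le_iff_ge, hinv, hinv]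

end ContinuousInjective

lemma mem_uIcc_of_abs_sub_le {a b a' b' y δ : ℝ} (hy : y ∈ uIcc a b) (ha : δ < |a - y|)
    (hb : δ < |b - y|) (ha' : |a' - a| ≤ δ) (hb' : |b' - b| ≤ δ) : y ∈ uIcc a' b' := by
  rw [abs_le] at ha' hb'
  rcases mem_uIcc.1 hy with ⟨hay, hyb⟩ | ⟨hby, hya⟩
  · rw [abs_of_nonpos (sub_nonpos.2 hay)] at ha
    rw [abs_of_nonneg (sub_nonneg.2 hyb)] at hb
    exact mem_uIcc.2 (Or.inl ⟨by linarith, by linarith⟩)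
  · rw [abs_of_nonneg (sub_nonneg.2 hya)] at ha
    rw [abs_of_nonpos (sub_nonpos.2 hby)] at hb
    exact mem_uIcc.2 (Or.inr ⟨by linarith, by linarith⟩)

lemma abs_sub_le_of_apply_eq {f g : ℝ → ℝ} (hf : Continuous f) (hf_inj : Injective f)
    (hg : Continuous g) (hg_inj : Injective g) {x z r δ : ℝ} (hr : 0 ≤ r)
    (hgl : δ < |g (z - r) - g z|) (hgr : δ < |g (z + r) - g z|)
    (hfgl : |f (z - r) - g (z - r)| ≤ δ) (hfgr : |f (z + r) - g (z + r)| ≤ δ) (hfx : f x = g z) :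
    |x - z| ≤ r := by
  have hgz := (hg.apply_mem_uIcc_iff hg_inj (a := z - r) (b := z + r) (x := z) (by linarith)).2
    ⟨by linarith, by linarith⟩
  have hfx' := mem_uIcc_of_abs_sub_le hgz hgl hgr hfgl hfgr
  rw [← hfx, hf.apply_mem_uIcc_iff hf_inj (by linarith)] at hfx'
  rw [abs_sub_le_iff]
  constructor <;> linarith [hfx'.1, hfx'.2]

theorem exists_isCompact_forall_abs_sub_le_of_leftInverse {g h : ℝ → ℝ} (hg : Continuous g)
    (hg_inj : Injective g) (hh : Continuous h) (hgh : LeftInverse g h) {U C : Set ℝ}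
    (hU : IsOpen U) (hC : IsCompact C) (hCU : h '' C ⊆ U) {ε : ℝ} (hε : 0 < ε) :
    ∃ K, IsCompact K ∧ K ⊆ U ∧ ∃ δ > 0, ∀ f : ℝ → ℝ, Continuous f → Injective f →
      (∀ x ∈ K, |f x - g x| ≤ δ) → ∀ y ∈ C, ∀ x, f x = y → |x - h y| ≤ ε := by
  obtain ⟨r₀, hr₀, hr₀U⟩ := (hC.image hh).exists_cthickening_subset_open hU hCU
  set r := min r₀ ε
  have hr : 0 < r := lt_min hr₀ hε
  have hK : ∀ y ∈ C, ∀ t, |t - h y| ≤ r → t ∈ Metric.cthickening r (h '' C) := fun y hy t ht =>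
    Metric.mem_cthickening_of_dist_le _ (h y) r _ (mem_image_of_mem h hy) ht
  have hgap : ∀ y ∈ C, 0 < min |g (h y - r) - g (h y)| |g (h y + r) - g (h y)| := fun y _ =>
    lt_min (abs_pos.2 (sub_ne_zero.2 (hg_inj.ne (by linarith))))
      (abs_pos.2 (sub_ne_zero.2 (hg_inj.ne (by linarith))))
  obtain ⟨δ, hδ, hδgap⟩ := hC.exists_forall_le' (by fun_prop) hgap
  refine ⟨_, (hC.image hh).cthickening, (Metric.cthickening_mono (min_le_left r₀ ε) _).trans hr₀U,
    δ / 2, half_pos hδ, fun f hf hf_inj hfg y hy x hfx => ?_⟩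
  obtain ⟨hδl, hδr⟩ := le_min_iff.1 (hδgap y hy)
  exact (abs_sub_le_of_apply_eq hf hf_inj hg hg_inj hr.le (by linarith) (by linarith)
    (hfg _ (hK y hy _ (by simp [abs_of_pos hr]))) (hfg _ (hK y hy _ (by simp [abs_of_pos hr])))
    (hfx.trans (hgh y).symm)).trans (min_le_right r₀ ε)

theorem Homog0S.invFun {φ g h : ℝ → ℝ} {d : ℝ} (hd : 0 < d) (hφ_bij : Bijective φ)
    (hφ : Homog0S 1 d φ g) (hh : Continuous h) (hgh : LeftInverse g h) (hhg : LeftInverse h g)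
    (hh0 : h 0 = 0) : Homog0S 1 (1 / d) (invFun φ) h := by
  obtain ⟨hφ_cont, hg, -, hφ_lim⟩ := hφ
  refine ⟨hφ_cont.continuous_invFun hφ_bij, hh,
    fun h0 => hgh.injective.ne zero_ne_one (by simp [h0]), ?_⟩
  intro C hC hC0 ε hε
  have hCU : h '' C ⊆ {0}ᶜ := by
    rintro _ ⟨s, hs, rfl⟩ (hs0 : h s = 0)
    exact hC0 (hgh.injective (hs0.trans hh0.symm) ▸ hs)
  obtain ⟨K, hK, hK0, δ, hδ, hstable⟩ := exists_isCompact_forall_abs_sub_le_of_leftInverse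
    hg hhg.injective hh hgh isOpen_compl_singleton hC hCU hε
  obtain ⟨l₀, hl₀, hφK⟩ := hφ_lim K hK (fun h0K => hK0 h0K rfl) δ hδ
  refine ⟨l₀ ^ d, by positivity, fun s hs l hl hll => ?_⟩
  set μ := l ^ (1 / d) with hμ_def
  have hμ : 0 < μ := by positivity
  have hμd : μ ^ d = l := by rw [hμ_def, one_div, Real.rpow_inv_rpow hl.le hd.ne']
  have hμl₀ : μ ≤ l₀ := by rwa [hμ_def, one_div, Real.rpow_inv_le_iff_of_pos hl.le hl₀.le hd]
  rw [Real.rpow_one]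
  refine hstable (fun x => φ (μ * x) / μ ^ d) (by fun_prop)
    (fun x y hxy => mul_left_cancel₀ hμ.ne' (hφ_bij.1 ((div_left_inj' (by positivity)).1 hxy)))
    (fun x hx => by simpa using hφK x hx μ hμ hμl₀) s hs _ ?_
  simp only [hμd, mul_div_cancel₀ _ hμ.ne', rightInverse_invFun hφ_bij.2 _,
    mul_div_cancel_left₀ _ hl.ne']

/-- Inverse of a bijective function homogeneous in the 0-limit with triple
`(1, d₀, s ↦ φ̄₀ · s^[d₀])`. -/
theorem inverse_homog0 (φ : ℝ → ℝ) (hbij : Function.Bijective φ)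
    (c₀ d₀ : ℝ) (hc₀ : c₀ ≠ 0) (hd₀ : 0 < d₀)
    (h : Homog0S 1 d₀ φ (fun s => c₀ * sgnPow s d₀)) :
    Homog0S 1 (1 / d₀) (Function.invFun φ) (fun s => sgnPow (s / c₀) (1 / d₀)) :=
  h.invFun hd₀ hbij ((continuous_sgnPow (by positivity)).comp (continuous_id.div_const c₀))
    (leftInverse_mul_sgnPow_sgnPow_div hc₀ hd₀.ne')
    (leftInverse_sgnPow_div_mul_sgnPow hc₀ hd₀.ne') (by simp [sgnPow_zero_left])
end

section
/- Let φ : ℝⁿ → ℝ be homogeneous in the 0-limit with triple (r₀, d₀, φ₀). Then for any index i, the partial primitive Φᵢ(x) = ∫₀^{xᵢ} φ(x₁,...,x_{i−1}, s, x_{i+1},...,xₙ) ds is homogeneous in the 0-limit with weight r₀, degree d₀ + r_{0,i}, and approximating function Φ_{i,0}(x) = ∫₀^{xᵢ} φ₀(x₁,...,x_{i−1}, s, x_{i+1},...,xₙ) ds. -/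
noncomputable def dil {n : ℕ} (r : Fin n → ℝ) (l : ℝ) (x : Fin n → ℝ) : Fin n → ℝ :=
  fun i => l ^ (r i) * x i

/-- `φ` is homogeneous in the 0-limit with associated triple `(r, d, φ₀)`. -/
def Homog0 {n : ℕ} (r : Fin n → ℝ) (d : ℝ) (φ φ₀ : (Fin n → ℝ) → ℝ) : Prop :=
  Continuous φ ∧ Continuous φ₀ ∧ φ₀ ≠ 0 ∧
    ∀ C : Set (Fin n → ℝ), IsCompact C → (0 : Fin n → ℝ) ∉ C →
      ∀ ε > (0:ℝ), ∃ l₀ > (0:ℝ), ∀ x ∈ C, ∀ l : ℝ, 0 < l → l ≤ l₀ →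
        |φ (dil r l x) / l ^ d - φ₀ x| ≤ ε

/-!
After the substitution `s = l ^ r i * u`, the quotient `Φ (l^r ⋄ x) / l ^ (d + r i) - Φ₀ x` is the
integral over `u ∈ [0, x i]` of `φ (l^r ⋄ y u) / l ^ d - φ₀ (y u)`, where `y u = update x i u`.
For `|u| ≥ δ` the points `y u` lie in a compact annulus avoiding `0`, where the integrand is
uniformly small. Near `u = 0` the points `y u` may approach the origin and the integrand is only
bounded: writing `y = μ^r ⋄ z` with `z` on the compact quasi-sphere `homNorm r z = 1` and `μ ≤ B`
gives `|φ (l^r ⋄ y)| ≲ (l μ) ^ d ≤ B ^ d * l ^ d`. A short enough piece `[-δ, δ]` therefore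
contributes little.
-/

open MeasureTheory Set Metric Interval

section Dilation

variable {n : ℕ} (r : Fin n → ℝ)

lemma dil_dil {l m : ℝ} (hl : 0 ≤ l) (hm : 0 ≤ m) (x : Fin n → ℝ) :
    dil r l (dil r m x) = dil r (l * m) x := by
  funext j; simp only [dil, Real.mul_rpow hl hm]; ring

@[simp] lemma dil_one (x : Fin n → ℝ) : dil r 1 x = x := by
  funext j; simp [dil]

lemma update_dil (l : ℝ) (x : Fin n → ℝ) (i : Fin n) (u : ℝ) :
    Function.update (dil r l x) i (l ^ r i * u) = dil r l (Function.update x i u) := by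
  funext j
  rcases eq_or_ne j i with rfl | hj
  · simp [dil]
  · simp [dil, Function.update_of_ne hj]

lemma continuous_dil (l : ℝ) : Continuous (dil r l) :=
  continuous_pi fun j => continuous_const.mul (continuous_apply j)

end Dilation

lemma norm_update_le {n : ℕ} {x : Fin n → ℝ} {R u : ℝ} (hx : ‖x‖ ≤ R) (hu : |u| ≤ R) (i : Fin n) :
    ‖Function.update x i u‖ ≤ R := by
  refine (pi_norm_le_iff_of_nonneg ((abs_nonneg u).trans hu)).2 fun j => ?_
  rcases eq_or_ne j i with rfl | hj
  · simpa using hu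
  · simpa [Function.update_of_ne hj] using (norm_le_pi_norm x j).trans hx

section HomNorm

variable {n : ℕ} {r : Fin n → ℝ}

noncomputable def homNorm (r : Fin n → ℝ) (y : Fin n → ℝ) : ℝ :=
  ∑ j, |y j| ^ (r j)⁻¹

lemma homNorm_pos {y : Fin n → ℝ} (hy : y ≠ 0) : 0 < homNorm r y := by
  obtain ⟨j, hj⟩ := Function.ne_iff.1 hy
  exact Finset.sum_pos' (fun _ _ => Real.rpow_nonneg (abs_nonneg _) _)
    ⟨j, Finset.mem_univ j, Real.rpow_pos_of_pos (abs_pos.2 hj) _⟩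

lemma homNorm_zero (hr : ∀ j, r j ≠ 0) : homNorm r 0 = 0 := by
  simp [homNorm, Real.zero_rpow, hr]

lemma homNorm_dil (hr : ∀ j, r j ≠ 0) {l : ℝ} (hl : 0 ≤ l) (y : Fin n → ℝ) :
    homNorm r (dil r l y) = l * homNorm r y := by
  simp only [homNorm, dil, Finset.mul_sum, abs_mul, abs_of_nonneg (Real.rpow_nonneg hl _),
    Real.mul_rpow (Real.rpow_nonneg hl _) (abs_nonneg _), Real.rpow_rpow_inv hl (hr _)]

lemma continuous_homNorm (hr : ∀ j, 0 ≤ r j) : Continuous (homNorm r) :=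
  continuous_finsetSum _ fun j _ =>
    (continuous_apply j).abs.rpow_const fun _ => Or.inr (inv_nonneg.2 (hr j))

lemma isCompact_homNorm_eq_one (hr : ∀ j, 0 < r j) : IsCompact {z | homNorm r z = 1} := by
  refine (isCompact_closedBall (0 : Fin n → ℝ) 1).of_isClosed_subset
    (isClosed_eq (continuous_homNorm fun j => (hr j).le) continuous_const) fun z hz => ?_
  rw [mem_closedBall_zero_iff, pi_norm_le_iff_of_nonneg zero_le_one]
  intro j
  by_contra! hj
  rw [Real.norm_eq_abs] at hj
  have hterm : |z j| ^ (r j)⁻¹ ≤ homNorm r z :=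
    Finset.single_le_sum (f := fun k => |z k| ^ (r k)⁻¹)
      (fun k _ => Real.rpow_nonneg (abs_nonneg _) _) (Finset.mem_univ j)
  have := Real.one_lt_rpow hj (inv_pos.2 (hr j))
  have hz : homNorm r z = 1 := hz
  linarith

lemma exists_homNorm_eq_one_dil (hr : ∀ j, r j ≠ 0) {y : Fin n → ℝ} (hy : y ≠ 0) :
    ∃ z, homNorm r z = 1 ∧ dil r (homNorm r y) z = y := by
  have hμ := homNorm_pos (r := r) hy
  refine ⟨dil r (homNorm r y)⁻¹ y, ?_, ?_⟩
  · rw [homNorm_dil hr (inv_nonneg.2 hμ.le), inv_mul_cancel₀ hμ.ne']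
  · rw [dil_dil r hμ.le (inv_nonneg.2 hμ.le), mul_inv_cancel₀ hμ.ne', dil_one]

end HomNorm

lemma abs_intervalIntegral_le_of_abs_le_near_zero {g : ℝ → ℝ} (hg : Continuous g)
    {b δ A B : ℝ} (hδ : 0 ≤ δ) (hA₀ : 0 ≤ A) (hB₀ : 0 ≤ B)
    (hA : ∀ u, u ≠ 0 → |u| ≤ δ → |g u| ≤ A) (hB : ∀ u, δ ≤ |u| → |u| ≤ |b| → |g u| ≤ B) :
    |∫ u in (0:ℝ)..b, g u| ≤ A * δ + B * |b| := by
  -- split the interval at the point `c` of `[-δ, δ]` closest to `b`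
  set c := max (-δ) (min δ b)
  have hc : |c| ≤ δ ∧ |b - c| ≤ |b| := by
    cases abs_cases b <;> cases abs_cases (b - c) <;> cases abs_cases c <;> grind
  have hnear : |∫ u in (0:ℝ)..c, g u| ≤ A * δ := by
    refine (intervalIntegral.norm_integral_le_of_norm_le_const_ae (f := g) (C := A) ?_).trans ?_
    · filter_upwards [volume.ae_ne 0] with u hu0 hu
      have := abs_sub_left_of_mem_uIcc (uIoc_subset_uIcc hu)
      rw [sub_zero, sub_zero] at this
      exact hA u hu0 (this.trans hc.1)
    · rw [sub_zero]
      exact mul_le_mul_of_nonneg_left hc.1 hA₀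
  have hfar : |∫ u in c..b, g u| ≤ B * |b| := by
    refine (intervalIntegral.norm_integral_le_of_norm_le_const (f := g) fun u hu => ?_).trans
      (mul_le_mul_of_nonneg_left hc.2 hB₀)
    rw [mem_uIoc] at hu
    cases abs_cases u <;> cases abs_cases b <;> exact hB u (by grind) (by grind)
  rw [← intervalIntegral.integral_add_adjacent_intervals (hg.intervalIntegrable 0 c)
    (hg.intervalIntegrable c b)]
  exact (abs_add_le _ _).trans (add_le_add hnear hfar)

section PartialPrimitive

variable {n : ℕ}

noncomputable def partialPrimitive (i : Fin n) (φ : (Fin n → ℝ) → ℝ) (x : Fin n → ℝ) : ℝ :=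
  ∫ s in (0:ℝ)..x i, φ (Function.update x i s)

lemma continuous_partialPrimitive {φ : (Fin n → ℝ) → ℝ} (hφ : Continuous φ) (i : Fin n) :
    Continuous (partialPrimitive i φ) :=
  intervalIntegral.continuous_parametric_intervalIntegral_of_continuous
    (f := fun x s => φ (Function.update x i s))
    (hφ.comp (continuous_fst.update i continuous_snd)) (continuous_apply i)

lemma hasDerivAt_partialPrimitive_update {φ : (Fin n → ℝ) → ℝ} (hφ : Continuous φ)
    (i : Fin n) (x : Fin n → ℝ) (t : ℝ) :
    HasDerivAt (fun s => partialPrimitive i φ (Function.update x i s))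
      (φ (Function.update x i t)) t := by
  simp only [partialPrimitive, Function.update_self, Function.update_idem]
  exact ((hφ.comp (continuous_const.update i continuous_id)).integral_hasStrictDerivAt 0 t
    ).hasDerivAt

lemma partialPrimitive_ne_zero {φ : (Fin n → ℝ) → ℝ} (hφ : Continuous φ) (hne : φ ≠ 0)
    (i : Fin n) : partialPrimitive i φ ≠ 0 := by
  intro h0
  refine hne (funext fun x => ?_)
  have hderiv := hasDerivAt_partialPrimitive_update hφ i x (x i)
  simp only [h0, Pi.zero_apply, Function.update_eq_self] at hderiv
  exact hderiv.unique (hasDerivAt_const _ _)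

lemma partialPrimitive_dil (r : Fin n → ℝ) (l : ℝ) (i : Fin n) (φ : (Fin n → ℝ) → ℝ)
    (x : Fin n → ℝ) :
    partialPrimitive i φ (dil r l x) =
      l ^ r i * ∫ u in (0:ℝ)..x i, φ (dil r l (Function.update x i u)) := by
  have := intervalIntegral.smul_integral_comp_mul_left (a := 0) (b := x i)
    (fun s => φ (Function.update (dil r l x) i s)) (l ^ r i)
  simp only [update_dil, mul_zero, smul_eq_mul] at this
  rw [this]
  rfl

lemma partialPrimitive_dil_div_sub {φ φ₀ : (Fin n → ℝ) → ℝ} (hφ : Continuous φ)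
    (hφ₀ : Continuous φ₀) (r : Fin n → ℝ) {l : ℝ} (hl : 0 < l) (d : ℝ) (i : Fin n)
    (x : Fin n → ℝ) :
    partialPrimitive i φ (dil r l x) / l ^ (d + r i) - partialPrimitive i φ₀ x =
      ∫ u in (0:ℝ)..x i,
        (φ (dil r l (Function.update x i u)) / l ^ d - φ₀ (Function.update x i u)) := by
  have hupd : Continuous fun u : ℝ => Function.update x i u :=
    continuous_const.update i continuous_id
  have hφ' : Continuous fun u => φ (dil r l (Function.update x i u)) / l ^ d :=
    (hφ.comp ((continuous_dil r l).comp hupd)).div_const _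
  have hφ₀' : Continuous fun u => φ₀ (Function.update x i u) := hφ₀.comp hupd
  rw [intervalIntegral.integral_sub (hφ'.intervalIntegrable _ _)
    (hφ₀'.intervalIntegrable _ _), intervalIntegral.integral_div,
    partialPrimitive_dil, Real.rpow_add hl]
  have : l ^ r i ≠ 0 := (Real.rpow_pos_of_pos hl _).ne'
  field_simp
  rfl

end PartialPrimitive

namespace Homog0

variable {n : ℕ} {r : Fin n → ℝ} {d : ℝ} {φ φ₀ : (Fin n → ℝ) → ℝ}

lemma exists_abs_div_le (hr : ∀ j, 0 < r j) (hd : 0 ≤ d) (h : Homog0 r d φ φ₀) (R : ℝ) :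
    ∃ K, ∃ l₀ > 0, ∀ y, y ≠ 0 → ‖y‖ ≤ R → ∀ l, 0 < l → l ≤ l₀ → |φ (dil r l y) / l ^ d| ≤ K := by
  have hr' : ∀ j, r j ≠ 0 := fun j => (hr j).ne'
  obtain ⟨-, hφ₀, -, hlim⟩ := h
  set S := {z | homNorm r z = 1}
  have hS0 : (0 : Fin n → ℝ) ∉ S := by simp [S, homNorm_zero hr']
  obtain ⟨M, hM⟩ := (isCompact_homNorm_eq_one hr).exists_bound_of_continuousOn hφ₀.continuousOn
  obtain ⟨l₁, hl₁, hS⟩ := hlim S (isCompact_homNorm_eq_one hr) hS0 1 one_pos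
  obtain ⟨B, hB⟩ := (isCompact_closedBall (0 : Fin n → ℝ) R).exists_bound_of_continuousOn
    (continuous_homNorm fun j => (hr j).le).continuousOn
  set B' := max B 1
  have hB' : 0 < B' := lt_max_of_lt_right one_pos
  refine ⟨(M + 1) * B' ^ d, l₁ / B', by positivity, fun y hy0 hyR l hl hll => ?_⟩
  set μ := homNorm r y
  obtain ⟨z, hz, hzy⟩ := exists_homNorm_eq_one_dil hr' hy0
  have hμ : 0 < μ := homNorm_pos hy0
  have hμB : μ ≤ B' := ((le_abs_self μ).trans (hB y (mem_closedBall_zero_iff.2 hyR))).trans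
    (le_max_left _ _)
  have hlμ : l * μ ≤ l₁ := calc
    l * μ ≤ l₁ / B' * B' := mul_le_mul hll hμB hμ.le (by positivity)
    _ = l₁ := div_mul_cancel₀ _ hB'.ne'
  have hφ₀z : |φ₀ z| ≤ M := hM z hz
  have hz1 := hS z hz (l * μ) (by positivity) hlμ
  rw [← hzy, dil_dil r hl.le hμ.le]
  calc |φ (dil r (l * μ) z) / l ^ d| = |φ (dil r (l * μ) z) / (l * μ) ^ d| * μ ^ d := by
        rw [Real.mul_rpow hl.le hμ.le, abs_div, abs_div, abs_mul,
          abs_of_pos (Real.rpow_pos_of_pos hl d), abs_of_pos (Real.rpow_pos_of_pos hμ d)]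
        field_simp
    _ ≤ (M + 1) * B' ^ d := by
        refine mul_le_mul ?_ (Real.rpow_le_rpow hμ.le hμB hd) (by positivity)
          (by linarith [abs_nonneg (φ₀ z)])
        linarith [abs_sub_abs_le_abs_sub (φ (dil r (l * μ) z) / (l * μ) ^ d) (φ₀ z)]

lemma abs_partialPrimitive_dil_div_sub_le (hr : ∀ j, 0 < r j) (hd : 0 ≤ d)
    (h : Homog0 r d φ φ₀) (i : Fin n) {R : ℝ} (hR : 0 < R) {ε : ℝ} (hε : 0 < ε) :
    ∃ l₀ > 0, ∀ x, ‖x‖ ≤ R → ∀ l, 0 < l → l ≤ l₀ →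
      |partialPrimitive i φ (dil r l x) / l ^ (d + r i) - partialPrimitive i φ₀ x| ≤ ε := by
  obtain ⟨K, l₂, hl₂, hK⟩ := h.exists_abs_div_le hr hd R
  obtain ⟨hφ, hφ₀, -, hlim⟩ := h
  obtain ⟨K₀, hK₀⟩ := (isCompact_closedBall (0 : Fin n → ℝ) R).exists_bound_of_continuousOn
    hφ₀.continuousOn
  set A := |K| + |K₀|
  set δ := min R (ε / (2 * (A + 1)))
  have hδ : 0 < δ := lt_min hR (by positivity)
  have hA : 0 < A + 1 := by positivity
  have hAδ : A * δ ≤ ε / 2 := calc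
    A * δ ≤ (A + 1) * (ε / (2 * (A + 1))) :=
      mul_le_mul (by linarith) (min_le_right _ _) hδ.le hA.le
    _ = ε / 2 := by field_simp
  set T := closedBall (0 : Fin n → ℝ) R ∩ {y | δ ≤ ‖y‖}
  have hT : IsCompact T := (isCompact_closedBall _ _).inter_right
    (isClosed_le continuous_const continuous_norm)
  have hT0 : (0 : Fin n → ℝ) ∉ T := fun h0 => by
    simpa [T, norm_zero] using (lt_of_lt_of_le hδ h0.2)
  obtain ⟨l₁, hl₁, hlimT⟩ := hlim T hT hT0 (ε / (2 * R)) (by positivity)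
  refine ⟨min l₁ l₂, lt_min hl₁ hl₂, fun x hx l hl hll => ?_⟩
  have hxi : |x i| ≤ R := by simpa using (norm_le_pi_norm x i).trans hx
  rw [partialPrimitive_dil_div_sub hφ hφ₀ r hl]
  have hupd : Continuous fun u : ℝ => Function.update x i u :=
    continuous_const.update i continuous_id
  refine (abs_intervalIntegral_le_of_abs_le_near_zero (A := A) (B := ε / (2 * R)) ?_ hδ.le
    (by positivity) (by positivity) (fun u hu0 hu => ?_) (fun u hu hux => ?_)).trans ?_
  · exact ((hφ.comp ((continuous_dil r l).comp hupd)).div_const _).sub (hφ₀.comp hupd)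
  · have hy := norm_update_le hx (hu.trans (min_le_left _ _)) i
    have hy0 : Function.update x i u ≠ 0 := fun h0 => hu0 (by simpa using congrFun h0 i)
    refine (abs_sub _ _).trans (add_le_add ?_ ?_)
    · exact (hK _ hy0 hy l hl (hll.trans (min_le_right _ _))).trans (le_abs_self K)
    · exact (hK₀ _ (mem_closedBall_zero_iff.2 hy)).trans (le_abs_self K₀)
  · refine hlimT _ ⟨mem_closedBall_zero_iff.2 (norm_update_le hx (hux.trans hxi) i), ?_⟩ l hl
      (hll.trans (min_le_left _ _))
    exact hu.trans (by simpa using norm_le_pi_norm (Function.update x i u) i)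
  · calc A * δ + ε / (2 * R) * |x i| ≤ ε / 2 + ε / (2 * R) * R := by gcongr
      _ = ε := by field_simp; ring

end Homog0

/-- Partial primitive of a function homogeneous in the 0-limit. -/
theorem integral_homog0 {n : ℕ} (r₀ : Fin n → ℝ) (hr₀ : ∀ j, 0 < r₀ j)
    (d₀ : ℝ) (hd₀ : 0 ≤ d₀) (φ φ₀ : (Fin n → ℝ) → ℝ)
    (h : Homog0 r₀ d₀ φ φ₀) (i : Fin n) :
    Homog0 r₀ (d₀ + r₀ i)
      (fun x => ∫ s in (0:ℝ)..(x i), φ (Function.update x i s))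
      (fun x => ∫ s in (0:ℝ)..(x i), φ₀ (Function.update x i s)) := by
  have ⟨hφ, hφ₀, hφ₀_ne, _⟩ := h
  refine ⟨continuous_partialPrimitive hφ i, continuous_partialPrimitive hφ₀ i,
    partialPrimitive_ne_zero hφ₀ hφ₀_ne i, fun C hC _ ε hε => ?_⟩
  obtain ⟨R, hR, hCR⟩ := hC.isBounded.subset_closedBall_lt 0 0
  obtain ⟨l₀, hl₀, hl₀_le⟩ := h.abs_partialPrimitive_dil_div_sub_le hr₀ hd₀ i hR hε
  exact ⟨l₀, hl₀, fun x hx => hl₀_le x (mem_closedBall_zero_iff.1 (hCR hx))⟩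
end

section
/- Key technical lemma: Let η : ℝⁿ → ℝ and γ : ℝⁿ → ℝ₊ be continuous functions homogeneous in the bi-limit with common weights r₀, r_∞ and common degrees d₀, d_∞, with approximating functions η₀, η_∞ and γ₀, γ_∞. Assume that on ℝⁿ\{0}, γ(x) = 0 implies η(x) < 0, γ₀(x) = 0 implies η₀(x) < 0, and γ_∞(x) = 0 implies η_∞(x) < 0. Then there exists c* ∈ ℝ such that for all c ≥ c* and all x ∈ ℝⁿ\{0}: η(x) − c·γ(x) < 0, η₀(x) − c·γ₀(x) < 0, and η_∞(x) − c·γ_∞(x) < 0. -/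
/-- `φ` is homogeneous in the ∞-limit with associated triple `(r, d, φinf)`. -/
def HomogInf {n : ℕ} (r : Fin n → ℝ) (d : ℝ) (φ φinf : (Fin n → ℝ) → ℝ) : Prop :=
  Continuous φ ∧ Continuous φinf ∧ φinf ≠ 0 ∧
    ∀ C : Set (Fin n → ℝ), IsCompact C → (0 : Fin n → ℝ) ∉ C →
      ∀ ε > (0:ℝ), ∃ linf > (0:ℝ), ∀ x ∈ C, ∀ l : ℝ, l ≥ linf →
        |φ (dil r l x) / l ^ d - φinf x| ≤ ε

/-!
After rescaling by dilations, `λ^{-d} (η - cγ)(λ^r ⋄ y)` converges to `η₀ - cγ₀` as `λ → 0`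
(to `η_∞ - cγ_∞` as `λ → ∞`) uniformly on the unit sphere of the homogeneous norm
`∑ |xᵢ|^{1/rᵢ}`. That sphere is compact and is covered by the open sets `{η₀ - kγ₀ < 0}`, `k ∈ ℕ`,
because `γ₀ ≥ 0` and `η₀ < 0` where `γ₀ = 0`. So some `c` makes `η₀ - cγ₀` negative on the
sphere, hence on `ℝⁿ \ {0}` by homogeneity, and makes `η - cγ` negative near `0`. The same
holds near `∞`, and the compact annulus in between is covered in the same way by `{η - kγ < 0}`.
As `γ ≥ 0`, each of these inequalities persists for all larger `c`.
-/

open Filter Topology Set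

section Dilation

variable {n : ℕ} {r : Fin n → ℝ}

lemma dil_dil_s10 (r : Fin n → ℝ) {a b : ℝ} (ha : 0 ≤ a) (hb : 0 ≤ b) (x : Fin n → ℝ) :
    dil r a (dil r b x) = dil r (a * b) x := by
  funext i
  simp only [dil, Real.mul_rpow ha hb]
  ring

lemma dil_ne_zero (r : Fin n → ℝ) {l : ℝ} (hl : 0 < l) {x : Fin n → ℝ} (hx : x ≠ 0) :
    dil r l x ≠ 0 := fun h =>
  hx <| funext fun i => by simpa [dil, (Real.rpow_pos_of_pos hl (r i)).ne'] using congrFun h i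

noncomputable def hnorm (r x : Fin n → ℝ) : ℝ :=
  ∑ i, |x i| ^ (r i)⁻¹

lemma hnorm_zero (hr : ∀ i, 0 < r i) : hnorm r 0 = 0 := by
  simp [hnorm, Real.zero_rpow (inv_ne_zero (hr _).ne')]

lemma hnorm_pos (r : Fin n → ℝ) {x : Fin n → ℝ} (hx : x ≠ 0) : 0 < hnorm r x := by
  obtain ⟨i, hi⟩ := Function.ne_iff.1 hx
  exact Finset.sum_pos' (fun j _ => by positivity)
    ⟨i, Finset.mem_univ i, Real.rpow_pos_of_pos (abs_pos.2 hi) _⟩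

lemma hnorm_dil (hr : ∀ i, 0 < r i) {l : ℝ} (hl : 0 < l) (x : Fin n → ℝ) :
    hnorm r (dil r l x) = l * hnorm r x := by
  rw [hnorm, hnorm, Finset.mul_sum]
  refine Finset.sum_congr rfl fun i _ => ?_
  rw [dil, abs_mul, abs_of_pos (Real.rpow_pos_of_pos hl _),
    Real.mul_rpow (Real.rpow_nonneg hl.le _) (abs_nonneg _), ← Real.rpow_mul hl.le,
    mul_inv_cancel₀ (hr i).ne', Real.rpow_one]

lemma continuous_hnorm (hr : ∀ i, 0 < r i) : Continuous (hnorm r) :=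
  continuous_finsetSum _ fun i _ =>
    (continuous_apply i).abs.rpow_const fun _ => Or.inr (inv_pos.2 (hr i)).le

lemma abs_le_rpow_of_hnorm_le (hr : ∀ i, 0 < r i) {x : Fin n → ℝ} {a : ℝ}
    (h : hnorm r x ≤ a) (i : Fin n) : |x i| ≤ a ^ r i := by
  have hi : |x i| ^ (r i)⁻¹ ≤ a :=
    (Finset.single_le_sum (f := fun j => |x j| ^ (r j)⁻¹) (fun j _ => by positivity)
      (Finset.mem_univ i)).trans h
  calc |x i| = (|x i| ^ (r i)⁻¹) ^ r i := by
        rw [← Real.rpow_mul (abs_nonneg _), inv_mul_cancel₀ (hr i).ne', Real.rpow_one]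
    _ ≤ a ^ r i := Real.rpow_le_rpow (by positivity) hi (hr i).le

lemma IsClosed.isCompact_of_hnorm_le (hr : ∀ i, 0 < r i) {K : Set (Fin n → ℝ)}
    (hK : IsClosed K) {a : ℝ} (h : ∀ x ∈ K, hnorm r x ≤ a) : IsCompact K :=
  (isCompact_univ_pi fun i => isCompact_Icc (a := -(a ^ r i)) (b := a ^ r i)).of_isClosed_subset
    hK fun x hx i _ => abs_le.1 (abs_le_rpow_of_hnorm_le hr (h x hx) i)

def hsphere (r : Fin n → ℝ) : Set (Fin n → ℝ) :=
  {x | hnorm r x = 1}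

lemma isCompact_hsphere (hr : ∀ i, 0 < r i) : IsCompact (hsphere r) :=
  (isClosed_eq (continuous_hnorm hr) continuous_const).isCompact_of_hnorm_le hr fun _ hx => hx.le

lemma zero_notMem_hsphere (hr : ∀ i, 0 < r i) : (0 : Fin n → ℝ) ∉ hsphere r := by
  simp [hsphere, hnorm_zero hr]

lemma exists_mem_hsphere_eq_dil (hr : ∀ i, 0 < r i) {x : Fin n → ℝ} (hx : x ≠ 0) :
    ∃ y ∈ hsphere r, x = dil r (hnorm r x) y := by
  have hl := hnorm_pos r hx
  refine ⟨dil r (hnorm r x)⁻¹ x, ?_, ?_⟩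
  · rw [hsphere, mem_ofPred_eq, hnorm_dil hr (inv_pos.2 hl), inv_mul_cancel₀ hl.ne']
  · rw [dil_dil_s10 r hl.le (inv_pos.2 hl).le, mul_inv_cancel₀ hl.ne']
    funext i
    simp [dil]

lemma neg_of_forall_hsphere_neg (hr : ∀ i, 0 < r i) {d : ℝ} {ψ : (Fin n → ℝ) → ℝ}
    (hψ : ∀ y ≠ 0, ∀ l > 0, ψ (dil r l y) = l ^ d * ψ y) (hS : ∀ y ∈ hsphere r, ψ y < 0)
    {x : Fin n → ℝ} (hx : x ≠ 0) : ψ x < 0 := by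
  obtain ⟨y, hy, hxy⟩ := exists_mem_hsphere_eq_dil hr hx
  rw [hxy, hψ y (ne_of_mem_of_not_mem hy (zero_notMem_hsphere hr)) _ (hnorm_pos r hx)]
  exact mul_neg_of_pos_of_neg (Real.rpow_pos_of_pos (hnorm_pos r hx) _) (hS y hy)

end Dilation

section CompactGain

variable {X : Type*} {f g : X → ℝ} {K : Set X}

lemma eventually_atTop_sub_mul_neg (hg : ∀ x ∈ K, 0 ≤ g x) {c : ℝ}
    (h : ∀ x ∈ K, f x - c * g x < 0) : ∀ᶠ c' in atTop, ∀ x ∈ K, f x - c' * g x < 0 :=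
  eventually_atTop.2 ⟨c, fun _ hc' x hx => by nlinarith [h x hx, hg x hx]⟩

lemma IsCompact.eventually_sub_mul_neg [TopologicalSpace X] (hK : IsCompact K)
    (hf : Continuous f) (hg : Continuous g) (hg0 : ∀ x ∈ K, 0 ≤ g x)
    (h : ∀ x ∈ K, g x = 0 → f x < 0) : ∀ᶠ c in atTop, ∀ x ∈ K, f x - c * g x < 0 := by
  let U : ℕ → Set X := fun k => {x | f x - k * g x < 0}
  have hU : ∀ k, IsOpen (U k) := fun k =>
    isOpen_lt (hf.sub (continuous_const.mul hg)) continuous_const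
  have hcover : K ⊆ ⋃ k, U k := by
    intro x hx
    rcases (hg0 x hx).eq_or_lt with hgx | hgx
    · exact mem_iUnion.2 ⟨0, by simpa [U] using h x hx hgx.symm⟩
    · obtain ⟨k, hk⟩ := exists_nat_gt (f x / g x)
      exact mem_iUnion.2 ⟨k, by simpa [U] using (div_lt_iff₀ hgx).1 hk⟩
  obtain ⟨t, ht⟩ := hK.elim_finite_subcover U hU hcover
  have hpieces : ∀ᶠ c in atTop, ∀ k ∈ t, ∀ x ∈ K ∩ U k, f x - c * g x < 0 :=
    (eventually_all_finset t).2 fun k _ =>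
      eventually_atTop_sub_mul_neg (fun x hx => hg0 x hx.1) fun x hx => hx.2
  filter_upwards [hpieces] with c hc x hx
  obtain ⟨k, hk, hxk⟩ := mem_iUnion₂.1 (ht hx)
  exact hc k hk x ⟨hx, hxk⟩

end CompactGain

section HomogLimit

variable {n : ℕ} {r : Fin n → ℝ} {d : ℝ}

noncomputable def rescale (r : Fin n → ℝ) (d : ℝ) (φ : (Fin n → ℝ) → ℝ) (l : ℝ)
    (x : Fin n → ℝ) : ℝ :=
  φ (dil r l x) / l ^ d

/-- `Homog0` and `HomogInf` are, up to the continuity and nondegeneracy conditions, the cases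
`F = 𝓝[>] 0` and `F = atTop`. -/
def HomogLimit (F : Filter ℝ) (r : Fin n → ℝ) (d : ℝ) (φ ψ : (Fin n → ℝ) → ℝ) : Prop :=
  ∀ C : Set (Fin n → ℝ), IsCompact C → (0 : Fin n → ℝ) ∉ C →
    TendstoUniformlyOn (rescale r d φ) ψ F C

lemma Homog0.homogLimit {φ φ₀ : (Fin n → ℝ) → ℝ} (h : Homog0 r d φ φ₀) :
    HomogLimit (𝓝[>] 0) r d φ φ₀ := by
  intro C hC h0
  refine Metric.tendstoUniformlyOn_iff.2 fun ε hε => ?_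
  obtain ⟨l₀, hl₀, hap⟩ := h.2.2.2 C hC h0 (ε / 2) (half_pos hε)
  filter_upwards [Ioo_mem_nhdsGT hl₀] with l hl x hx
  rw [dist_comm, Real.dist_eq]
  exact (hap x hx l hl.1 hl.2.le).trans_lt (half_lt_self hε)

lemma HomogInf.homogLimit {φ φinf : (Fin n → ℝ) → ℝ} (h : HomogInf r d φ φinf) :
    HomogLimit atTop r d φ φinf := by
  intro C hC h0
  refine Metric.tendstoUniformlyOn_iff.2 fun ε hε => ?_
  obtain ⟨linf, -, hap⟩ := h.2.2.2 C hC h0 (ε / 2) (half_pos hε)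
  filter_upwards [eventually_ge_atTop linf] with l hl x hx
  rw [dist_comm, Real.dist_eq]
  exact (hap x hx l hl).trans_lt (half_lt_self hε)

lemma tendsto_mul_const_nhdsGT_zero {μ : ℝ} (hμ : 0 < μ) :
    Tendsto (· * μ) (𝓝[>] (0 : ℝ)) (𝓝[>] 0) :=
  ((continuous_mul_const μ).tendsto' 0 0 (zero_mul μ)).inf
    (tendsto_principal_principal.2 fun _ hl => mul_pos hl hμ)

lemma rescale_dil (φ : (Fin n → ℝ) → ℝ) {l μ : ℝ} (hl : 0 < l) (hμ : 0 < μ)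
    (x : Fin n → ℝ) : rescale r d φ l (dil r μ x) = μ ^ d * rescale r d φ (l * μ) x := by
  have := Real.rpow_pos_of_pos hl d
  have := Real.rpow_pos_of_pos hμ d
  rw [rescale, rescale, dil_dil_s10 r hl.le hμ.le, Real.mul_rpow hl.le hμ.le]
  field_simp

variable {F : Filter ℝ} {φ ψ η γ η' γ' : (Fin n → ℝ) → ℝ}

lemma HomogLimit.tendsto (h : HomogLimit F r d φ ψ) {x : Fin n → ℝ} (hx : x ≠ 0) :
    Tendsto (fun l => rescale r d φ l x) F (𝓝 (ψ x)) :=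
  (h {x} isCompact_singleton (by simpa [eq_comm] using hx)).tendsto_at rfl

lemma HomogLimit.sub_const_mul (hη : HomogLimit F r d η η')
    (hγ : HomogLimit F r d γ γ') (c : ℝ) :
    HomogLimit F r d (fun x => η x - c * γ x) (fun x => η' x - c * γ' x) := by
  intro C hC h0
  convert (hη C hC h0).sub ((uniformContinuous_const_smul c).comp_tendstoUniformlyOn
    (hγ C hC h0)) using 1 <;> ext <;> simp [rescale, sub_div, mul_div_assoc]

lemma HomogLimit.nonneg [F.NeBot] (hF : ∀ᶠ l in F, 0 < l) (h : HomogLimit F r d φ ψ)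
    (hφ : ∀ x, 0 ≤ φ x) {x : Fin n → ℝ} (hx : x ≠ 0) : 0 ≤ ψ x :=
  ge_of_tendsto (h.tendsto hx) (hF.mono fun _ hl => div_nonneg (hφ _) (by positivity))

lemma HomogLimit.map_dil [F.NeBot] (hF : ∀ᶠ l in F, 0 < l) {μ : ℝ}
    (hFμ : Tendsto (· * μ) F F) (h : HomogLimit F r d φ ψ) (hμ : 0 < μ) {x : Fin n → ℝ}
    (hx : x ≠ 0) : ψ (dil r μ x) = μ ^ d * ψ x := by
  refine tendsto_nhds_unique (h.tendsto (dil_ne_zero r hμ hx)) ?_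
  refine (((h.tendsto hx).comp hFμ).const_mul (μ ^ d)).congr' ?_
  filter_upwards [hF] with l hl using (rescale_dil φ hl hμ x).symm

lemma HomogLimit.eventually_forall_neg (hF : ∀ᶠ l in F, 0 < l) (h : HomogLimit F r d φ ψ)
    {S : Set (Fin n → ℝ)} (hS : IsCompact S) (h0 : (0 : Fin n → ℝ) ∉ S)
    (hψ : ContinuousOn ψ S) (hneg : ∀ y ∈ S, ψ y < 0) :
    ∀ᶠ l in F, ∀ y ∈ S, φ (dil r l y) < 0 := by
  -- a uniform margin `δ` below zero survives uniform convergence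
  obtain ⟨δ, hδ, hδS⟩ := hS.exists_forall_le' hψ.neg fun y hy => neg_pos.2 (hneg y hy)
  filter_upwards [hF, Metric.tendstoUniformlyOn_iff.1 (h S hS h0) δ hδ] with l hl hclose y hy
  have hclose := abs_lt.1 (Real.dist_eq _ _ ▸ hclose y hy)
  have hrescale : φ (dil r l y) / l ^ d < 0 := by
    simp only [rescale] at hclose
    linarith [show δ ≤ -ψ y from hδS y hy]
  simpa using (div_lt_iff₀ (Real.rpow_pos_of_pos hl d)).1 hrescale

lemma HomogLimit.eventually_forall_hsphere_sub_mul_neg [F.NeBot] (hF : ∀ᶠ l in F, 0 < l)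
    (hr : ∀ i, 0 < r i) (hγ : HomogLimit F r d γ γ') (hη' : Continuous η')
    (hγ' : Continuous γ') (hγnn : ∀ x, 0 ≤ γ x) (h : ∀ x, x ≠ 0 → γ' x = 0 → η' x < 0) :
    ∀ᶠ c in atTop, ∀ y ∈ hsphere r, η' y - c * γ' y < 0 :=
  have hne : ∀ y ∈ hsphere r, y ≠ 0 := fun _ hy => ne_of_mem_of_not_mem hy (zero_notMem_hsphere hr)
  (isCompact_hsphere hr).eventually_sub_mul_neg hη' hγ'
    (fun y hy => hγ.nonneg hF hγnn (hne y hy)) fun y hy => h y (hne y hy)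

lemma HomogLimit.eventually_forall_sub_mul_neg [F.NeBot] (hF : ∀ᶠ l in F, 0 < l)
    (hFmul : ∀ μ > 0, Tendsto (· * μ) F F) (hr : ∀ i, 0 < r i) (hη : HomogLimit F r d η η')
    (hγ : HomogLimit F r d γ γ') (hη' : Continuous η') (hγ' : Continuous γ')
    (hγnn : ∀ x, 0 ≤ γ x) (h : ∀ x, x ≠ 0 → γ' x = 0 → η' x < 0) :
    ∀ᶠ c in atTop, ∀ x, x ≠ 0 → η' x - c * γ' x < 0 := by
  filter_upwards [hγ.eventually_forall_hsphere_sub_mul_neg hF hr hη' hγ' hγnn h] with c hc x hx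
  exact neg_of_forall_hsphere_neg hr
    (fun y hy μ hμ => (hη.sub_const_mul hγ c).map_dil hF (hFmul μ hμ) hμ hy) hc hx

lemma HomogLimit.exists_mem_eventually_sub_mul_neg [F.NeBot] (hF : ∀ᶠ l in F, 0 < l)
    (hr : ∀ i, 0 < r i) (hη : HomogLimit F r d η η') (hγ : HomogLimit F r d γ γ')
    (hη' : Continuous η') (hγ' : Continuous γ') (hγnn : ∀ x, 0 ≤ γ x)
    (h : ∀ x, x ≠ 0 → γ' x = 0 → η' x < 0) :
    ∃ T ∈ F, ∀ᶠ c in atTop, ∀ x, x ≠ 0 → hnorm r x ∈ T → η x - c * γ x < 0 := by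
  obtain ⟨c, hc⟩ := (hγ.eventually_forall_hsphere_sub_mul_neg hF hr hη' hγ' hγnn h).exists
  have hT := (hη.sub_const_mul hγ c).eventually_forall_neg hF (isCompact_hsphere hr)
    (zero_notMem_hsphere hr) (hη'.sub (continuous_const.mul hγ')).continuousOn hc
  refine ⟨_, hT, ?_⟩
  have hK : ∀ x ∈ {x | x ≠ 0 ∧ hnorm r x ∈ {l | ∀ y ∈ hsphere r,
      η (dil r l y) - c * γ (dil r l y) < 0}}, η x - c * γ x < 0 := by
    rintro x ⟨hx, hxT⟩
    obtain ⟨y, hy, hxy⟩ := exists_mem_hsphere_eq_dil hr hx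
    exact hxy ▸ hxT y hy
  filter_upwards [eventually_atTop_sub_mul_neg (fun x _ => hγnn x) hK] with c' hc' x hx hxT
  exact hc' x ⟨hx, hxT⟩

end HomogLimit

/-- Key technical lemma for functions homogeneous in the bi-limit. -/
theorem key_technical_lemma {n : ℕ} (r0 rinf : Fin n → ℝ)
    (hr0 : ∀ i, 0 < r0 i) (hrinf : ∀ i, 0 < rinf i) (d0 dinf : ℝ)
    (η γ η0 ηinf γ0 γinf : (Fin n → ℝ) → ℝ)
    (hγnn : ∀ x, 0 ≤ γ x)
    (hη0 : Homog0 r0 d0 η η0) (hηinf : HomogInf rinf dinf η ηinf)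
    (hγ0 : Homog0 r0 d0 γ γ0) (hγinf : HomogInf rinf dinf γ γinf)
    (h1 : ∀ x : Fin n → ℝ, x ≠ 0 → γ x = 0 → η x < 0)
    (h2 : ∀ x : Fin n → ℝ, x ≠ 0 → γ0 x = 0 → η0 x < 0)
    (h3 : ∀ x : Fin n → ℝ, x ≠ 0 → γinf x = 0 → ηinf x < 0) :
    ∃ cstar : ℝ, ∀ c ≥ cstar, ∀ x : Fin n → ℝ, x ≠ 0 →
      η x - c * γ x < 0 ∧ η0 x - c * γ0 x < 0 ∧ ηinf x - c * γinf x < 0 := by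
  have hF0 : ∀ᶠ l in 𝓝[>] (0 : ℝ), 0 < l := self_mem_nhdsWithin
  have hFinf : ∀ᶠ l in atTop, (0 : ℝ) < l := eventually_gt_atTop 0
  obtain ⟨T0, hT0, hnear0⟩ := hη0.homogLimit.exists_mem_eventually_sub_mul_neg hF0 hr0
    hγ0.homogLimit hη0.2.1 hγ0.2.1 hγnn h2
  obtain ⟨Tinf, hTinf, hnearinf⟩ := hηinf.homogLimit.exists_mem_eventually_sub_mul_neg hFinf
    hrinf hγinf.homogLimit hηinf.2.1 hγinf.2.1 hγnn h3
  obtain ⟨L0, hL0, hL0T⟩ := mem_nhdsGT_iff_exists_Ioo_subset.1 hT0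
  obtain ⟨Linf, hLinfT⟩ := mem_atTop_sets.1 hTinf
  have hannulus : IsCompact {x | L0 ≤ hnorm r0 x ∧ hnorm rinf x ≤ Linf} :=
    ((isClosed_le continuous_const (continuous_hnorm hr0)).inter
      (isClosed_le (continuous_hnorm hrinf) continuous_const)).isCompact_of_hnorm_le hrinf
      fun _ hx => hx.2
  have hmiddle := hannulus.eventually_sub_mul_neg hη0.1 hγ0.1 (fun x _ => hγnn x)
    fun x hx => h1 x fun hx0 => (hL0.trans_le (hx0 ▸ hx.1)).ne' (hnorm_zero hr0)
  have happrox0 := hη0.homogLimit.eventually_forall_sub_mul_neg hF0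
    (fun _ => tendsto_mul_const_nhdsGT_zero) hr0 hγ0.homogLimit hη0.2.1 hγ0.2.1 hγnn h2
  have happroxinf := hηinf.homogLimit.eventually_forall_sub_mul_neg hFinf
    (fun _ hμ => tendsto_id.atTop_mul_const hμ) hrinf hγinf.homogLimit hηinf.2.1 hγinf.2.1 hγnn h3
  obtain ⟨cstar, hcstar⟩ := eventually_atTop.1
    (hnear0.and (hnearinf.and (hmiddle.and (happrox0.and happroxinf))))
  refine ⟨cstar, fun c hc x hx => ?_⟩
  obtain ⟨hc0, hcinf, hcmid, hcapprox0, hcapproxinf⟩ := hcstar c hc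
  refine ⟨?_, hcapprox0 x hx, hcapproxinf x hx⟩
  rcases lt_or_ge (hnorm r0 x) L0 with hx0 | hx0
  · exact hc0 x hx (hL0T ⟨hnorm_pos r0 hx, hx0⟩)
  rcases le_or_gt Linf (hnorm rinf x) with hxinf | hxinf
  · exact hcinf x hx (hLinfT _ hxinf)
  · exact hcmid x ⟨hx0, hxinf.le⟩
end

section
/- Finite-time convergence from a differential inequality: Let v : [0,∞) → ℝ₊ be a C¹ function satisfying v'(t) ≤ −c·(v(t)^{(d+e)/d} + v(t)^{(D+E)/D}) for all t ≥ 0, where c > 0, d, D > 0, e < 0 with d + e > 0, and E > 0. Then v(t) = 0 for all t ≥ T* where T* = (1/c)·(D/E + d/|e|); in particular T* does not depend on v(0). -/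
/-!
While `v > 0`, the inequality `v' ≤ -k v ^ p` with `p ≠ 1` makes `v ^ (1 - p) / (1 - p) + k t`
nonincreasing. For the exponent `(D + E) / D > 1` this forces `v ≤ 1` by time `D / (c E)`,
whatever `v 0` is; for the exponent `(d + e) / d < 1` it then drives `v` from at most `1` down to
`0` within a further time `d / (c |e|)`.
-/

open Set

section RpowDecay

variable {v : ℝ → ℝ} {a b k p : ℝ}

theorem antitoneOn_of_deriv_le_neg_mul_rpow (hv : Differentiable ℝ v) (hk : 0 ≤ k)
    (hvnn : ∀ s, 0 ≤ v s) (hderiv : ∀ s ∈ Ioo a b, deriv v s ≤ -k * v s ^ p) :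
    AntitoneOn v (Icc a b) := by
  refine antitoneOn_of_deriv_nonpos (convex_Icc a b) hv.continuous.continuousOn
    hv.differentiableOn fun s hs => ?_
  rw [interior_Icc] at hs
  nlinarith [hderiv s hs, Real.rpow_nonneg (hvnn s) p]

theorem mul_sub_le_rpow_sub_div_of_deriv_le_neg_mul_rpow (hv : Differentiable ℝ v)
    (hp : p ≠ 1) (hab : a ≤ b) (hpos : ∀ s ∈ Icc a b, 0 < v s)
    (hderiv : ∀ s ∈ Ioo a b, deriv v s ≤ -k * v s ^ p) :
    k * (b - a) ≤ (v a ^ (1 - p) - v b ^ (1 - p)) / (1 - p) := by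
  have hp' : 1 - p ≠ 0 := sub_ne_zero.2 hp.symm
  have hφ : ∀ s ∈ Icc a b, HasDerivAt (fun s => v s ^ (1 - p) / (1 - p) + k * s)
      (deriv v s * (v s ^ p)⁻¹ + k) s := by
    intro s hs
    have h := (((hv s).hasDerivAt.rpow_const (p := 1 - p) (Or.inl (hpos s hs).ne')).div_const
      (1 - p)).add ((hasDerivAt_id s).const_mul k)
    refine h.congr_deriv ?_
    rw [sub_sub_cancel_left, Real.rpow_neg (hpos s hs).le]
    field_simp
  have hφ_le := antitoneOn_of_deriv_nonpos (convex_Icc a b)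
    (fun s hs => (hφ s hs).continuousAt.continuousWithinAt)
    (fun s hs => (hφ s (interior_subset hs)).differentiableAt.differentiableWithinAt)
    (fun s hs => ?_) (left_mem_Icc.2 hab) (right_mem_Icc.2 hab) hab
  · rw [sub_div]
    linarith
  rw [interior_Icc] at hs
  have hvp : 0 < v s ^ p := Real.rpow_pos_of_pos (hpos s (Ioo_subset_Icc_self hs)) p
  rw [(hφ s (Ioo_subset_Icc_self hs)).deriv]
  have := mul_le_mul_of_nonneg_right (hderiv s hs) (inv_nonneg.2 hvp.le)
  rw [mul_assoc, mul_inv_cancel₀ hvp.ne', mul_one] at this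
  linarith

theorem le_one_of_deriv_le_neg_mul_rpow (hv : Differentiable ℝ v) (hvnn : ∀ s, 0 ≤ v s)
    (hp : 1 < p) (hk : 0 ≤ k) (hab : a ≤ b) (hderiv : ∀ s ∈ Ioo a b, deriv v s ≤ -k * v s ^ p)
    (htime : 1 ≤ (p - 1) * k * (b - a)) : v b ≤ 1 := by
  by_contra! hvb
  have hpos : ∀ s ∈ Icc a b, 0 < v s := fun s hs => zero_lt_one.trans <| hvb.trans_le <|
    antitoneOn_of_deriv_le_neg_mul_rpow hv hk hvnn hderiv hs (right_mem_Icc.2 hab) hs.2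
  have key := mul_sub_le_rpow_sub_div_of_deriv_le_neg_mul_rpow hv hp.ne' hab hpos hderiv
  rw [le_div_iff_of_neg (by linarith)] at key
  have hvb' : v b ^ (1 - p) < 1 := Real.rpow_lt_one_of_one_lt_of_neg hvb (by linarith)
  have hva : 0 < v a ^ (1 - p) := Real.rpow_pos_of_pos (hpos a (left_mem_Icc.2 hab)) _
  linarith

theorem eq_zero_of_deriv_le_neg_mul_rpow (hv : Differentiable ℝ v) (hvnn : ∀ s, 0 ≤ v s)
    (hp : p < 1) (hk : 0 ≤ k) (hab : a ≤ b) (hderiv : ∀ s ∈ Ioo a b, deriv v s ≤ -k * v s ^ p)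
    (hva : v a ≤ 1) (htime : 1 ≤ (1 - p) * k * (b - a)) : v b = 0 := by
  by_contra hvb
  replace hvb : 0 < v b := (hvnn b).lt_of_ne' hvb
  have hpos : ∀ s ∈ Icc a b, 0 < v s := fun s hs => hvb.trans_le <|
    antitoneOn_of_deriv_le_neg_mul_rpow hv hk hvnn hderiv hs (right_mem_Icc.2 hab) hs.2
  have key := mul_sub_le_rpow_sub_div_of_deriv_le_neg_mul_rpow hv hp.ne hab hpos hderiv
  rw [le_div_iff₀ (by linarith)] at key
  have hva' : v a ^ (1 - p) ≤ 1 := Real.rpow_le_one (hvnn a) hva (by linarith)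
  have hvb' : 0 < v b ^ (1 - p) := Real.rpow_pos_of_pos hvb _
  linarith

end RpowDecay

theorem finite_time_convergence_general (c d D e E : ℝ)
    (hc : 0 < c) (hd : 0 < d) (hD : 0 < D) (he : e < 0) (hE : 0 < E)
    (v : ℝ → ℝ) (hv : ContDiff ℝ 1 v) (hvnn : ∀ t, 0 ≤ v t)
    (hineq : ∀ t ≥ (0:ℝ),
      deriv v t ≤ -c * (v t ^ ((d + e) / d) + v t ^ ((D + E) / D))) :
    ∀ t : ℝ, (1 / c) * (D / E + d / |e|) ≤ t → v t = 0 := by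
  intro t ht
  have hdiff : Differentiable ℝ v := hv.differentiable one_ne_zero
  have hlow : ∀ s ∈ Ioi (0 : ℝ), deriv v s ≤ -c * v s ^ ((d + e) / d) := fun s hs => by
    nlinarith [hineq s (le_of_lt hs), Real.rpow_nonneg (hvnn s) ((D + E) / D)]
  have hhigh : ∀ s ∈ Ioi (0 : ℝ), deriv v s ≤ -c * v s ^ ((D + E) / D) := fun s hs => by
    nlinarith [hineq s (le_of_lt hs), Real.rpow_nonneg (hvnn s) ((d + e) / d)]
  have hA : (d + e) / d < 1 := (div_lt_one hd).2 (by linarith)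
  have hB : 1 < (D + E) / D := (one_lt_div hD).2 (by linarith)
  have hT₁ : 0 ≤ D / (c * E) := by positivity
  have hT₂ : 0 ≤ d / (c * -e) := by have := neg_pos.2 he; positivity
  have hT : D / (c * E) + d / (c * -e) ≤ t := by
    rw [abs_of_neg he] at ht
    field_simp at ht ⊢
    linarith
  have hvT₁ : v (D / (c * E)) ≤ 1 :=
    le_one_of_deriv_le_neg_mul_rpow hdiff hvnn hB hc.le hT₁
      (fun s hs => hhigh s hs.1) (le_of_eq (by field_simp; ring))
  refine eq_zero_of_deriv_le_neg_mul_rpow hdiff hvnn hA hc.le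
    (by linarith) (fun s hs => hlow s (hT₁.trans_lt hs.1)) hvT₁ ?_
  calc (1 : ℝ) = (1 - (d + e) / d) * c * (d / (c * -e)) := by field_simp [he.ne]; ring
    _ ≤ (1 - (d + e) / d) * c * (t - D / (c * E)) := by
      gcongr
      linarith

/-- Uniform finite-time convergence from the bi-limit differential inequality:
the settling time `T* = (1/c)(D/E + d/|e|)` does not depend on the initial condition. -/
theorem finite_time_convergence (c d D e E : ℝ)
    (hc : 0 < c) (hd : 0 < d) (hD : 0 < D) (he : e < 0) (hde : 0 < d + e) (hE : 0 < E)
    (v : ℝ → ℝ) (hv : ContDiff ℝ 1 v) (hvnn : ∀ t, 0 ≤ v t)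
    (hineq : ∀ t ≥ (0:ℝ),
      deriv v t ≤ -c * (v t ^ ((d + e) / d) + v t ^ ((D + E) / D))) :
    ∀ t : ℝ, (1 / c) * (D / E + d / |e|) ≤ t → v t = 0 :=
  finite_time_convergence_general c d D e E hc hd hD he hE v hv hvnn hineq
end

section
/- Growth inequality for the function 𝕳-based gains: Let μ(s) = 𝕳(s^q, s^p) = s^q(1+s^p)/(1+s^q) for s ≥ 0, with p, q > 0, and define C(c) = max{c^q, c^p} + c^{pq/(q+p)} + c^{p+q}. Then μ(c·s) ≤ C(c)·μ(s) for all c, s ≥ 0. -/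
set_option maxHeartbeats 800000

private lemma aux1 {x θ : ℝ} (hx : 0 < x) (h0 : 0 ≤ θ) (h1 : θ ≤ 1) :
    x ≤ x ^ θ * (1 + x) := by
  rcases le_or_gt x 1 with h | h
  · have hxθ : x ≤ x ^ θ := by
      calc x = x ^ (1:ℝ) := (Real.rpow_one x).symm
      _ ≤ x ^ θ := Real.rpow_le_rpow_of_exponent_ge hx h h1
    nlinarith
  · have hxθ : (1:ℝ) ≤ x ^ θ := by
      calc (1:ℝ) = x ^ (0:ℝ) := (Real.rpow_zero x).symm
      _ ≤ x ^ θ := Real.rpow_le_rpow_of_exponent_le h.le h0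
    nlinarith

private lemma aux2 {y τ : ℝ} (hy : 0 < y) (h0 : 0 ≤ τ) (h1 : τ ≤ 1) :
    y ^ τ ≤ 1 + y := by
  rcases le_or_gt y 1 with h | h
  · have := Real.rpow_le_one hy.le h h0
    linarith
  · have h2 : y ^ τ ≤ y ^ (1:ℝ) := Real.rpow_le_rpow_of_exponent_le h.le h1
    rw [Real.rpow_one] at h2
    linarith

/-- Growth inequality for the 𝕳-based gain `μ(s) = s^q(1+s^p)/(1+s^q)`:
`μ(c·s) ≤ C(c)·μ(s)` with `C(c) = max{c^q, c^p} + c^{pq/(q+p)} + c^{p+q}`. -/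
theorem gain_growth (p q : ℝ) (hp : 0 < p) (hq : 0 < q)
    (μ Cf : ℝ → ℝ)
    (hμ : ∀ s : ℝ, μ s = s ^ q * (1 + s ^ p) / (1 + s ^ q))
    (hC : ∀ c : ℝ, Cf c = max (c ^ q) (c ^ p) + c ^ (p * q / (q + p)) + c ^ (p + q)) :
    ∀ c ≥ (0:ℝ), ∀ s ≥ (0:ℝ), μ (c * s) ≤ Cf c * μ s := by
  intro c hc s hs
  have hμ0 : μ 0 = 0 := by
    rw [hμ, Real.zero_rpow hq.ne', Real.zero_rpow hp.ne']; norm_num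
  have hCnn : 0 ≤ Cf c := by
    rw [hC]
    have h1 : (0:ℝ) ≤ c ^ q := Real.rpow_nonneg hc _
    have h2 : (0:ℝ) ≤ c ^ (p*q/(q+p)) := Real.rpow_nonneg hc _
    have h3 : (0:ℝ) ≤ c ^ (p+q) := Real.rpow_nonneg hc _
    have h4 := le_max_left (c ^ q) (c ^ p)
    linarith
  have hμnn : 0 ≤ μ s := by
    rw [hμ]
    have h1 : (0:ℝ) ≤ s ^ q := Real.rpow_nonneg hs _
    have h2 : (0:ℝ) ≤ s ^ p := Real.rpow_nonneg hs _
    positivity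
  rcases eq_or_lt_of_le hc with hc0 | hcpos
  · rw [← hc0] at hCnn ⊢
    rw [zero_mul, hμ0]
    exact mul_nonneg hCnn hμnn
  rcases eq_or_lt_of_le hs with hs0 | hspos
  · rw [← hs0, mul_zero, hμ0, mul_zero]
  -- main case : c > 0, s > 0
  set a := c ^ q with ha
  set b := c ^ p with hb
  set A := s ^ q with hA
  set B := s ^ p with hB
  have hapos : 0 < a := Real.rpow_pos_of_pos hcpos _
  have hbpos : 0 < b := Real.rpow_pos_of_pos hcpos _
  have hApos : 0 < A := Real.rpow_pos_of_pos hspos _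
  have hBpos : 0 < B := Real.rpow_pos_of_pos hspos _
  have hxq : (c*s) ^ q = a * A := Real.mul_rpow hc hs
  have hxp : (c*s) ^ p = b * B := Real.mul_rpow hc hs
  set θ : ℝ := p / (p + q) with hθ
  have hpq : 0 < p + q := by linarith
  have hθ0 : 0 ≤ θ := by positivity
  have hθ1 : θ ≤ 1 := by rw [hθ, div_le_one hpq]; linarith
  have eq1 : q * θ = p * q / (q + p) := by
    rw [hθ]; field_simp; ring
  have eq2 : p * (1 - θ) = p * q / (q + p) := by
    rw [hθ]; field_simp; ring
  have hI : (a*A) ^ θ = c ^ (p*q/(q+p)) * B ^ (1-θ) := by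
    rw [ha, hA, hB,
        Real.mul_rpow (Real.rpow_nonneg hc q) (Real.rpow_nonneg hs q),
        ← Real.rpow_mul hc, ← Real.rpow_mul hs, ← Real.rpow_mul hs,
        eq1, eq2]
  have hcr : 0 ≤ c ^ (p*q/(q+p)) := Real.rpow_nonneg hc _
  -- K2 : the interpolation bound
  have K2 : a*A ≤ c ^ (p*q/(q+p)) * ((1+a*A)*(1+B)) := by
    have h1 : a*A ≤ (a*A) ^ θ * (1 + a*A) := aux1 (mul_pos hapos hApos) hθ0 hθ1
    have h2 : B ^ (1-θ) ≤ 1 + B := aux2 hBpos (by linarith) (by linarith)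
    rw [hI] at h1
    have h3 : c ^ (p*q/(q+p)) * B ^ (1-θ) * (1+a*A) ≤
        c ^ (p*q/(q+p)) * (1+B) * (1+a*A) := by
      have := mul_le_mul_of_nonneg_left h2 hcr
      nlinarith [mul_pos hapos hApos]
    calc a*A ≤ c ^ (p*q/(q+p)) * B ^ (1-θ) * (1+a*A) := h1
    _ ≤ c ^ (p*q/(q+p)) * (1+B) * (1+a*A) := h3
    _ = c ^ (p*q/(q+p)) * ((1+a*A)*(1+B)) := by ring
  set M : ℝ := max a b with hM
  have haM : a ≤ M := le_max_left _ _
  have hbM : b ≤ M := le_max_right _ _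
  have hMnn : 0 ≤ M := le_trans hapos.le haM
  have K1 : a + a*b*(A*B) ≤ M * ((1+a*A)*(1+B)) := by
    nlinarith [mul_pos hApos hBpos, mul_pos hapos hApos, mul_nonneg hMnn hBpos.le,
      mul_nonneg hMnn (mul_pos hapos hApos).le,
      mul_le_mul_of_nonneg_right hbM (mul_nonneg hapos.le (mul_pos hApos hBpos).le),
      mul_nonneg hMnn (mul_nonneg hapos.le (mul_nonneg hApos.le hBpos.le))]
  have K3 : a*b*B ≤ b*a*((1+a*A)*(1+B)) := by
    nlinarith [mul_pos hapos hbpos, mul_pos hApos hBpos, mul_pos (mul_pos hapos hbpos) hApos,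
      mul_nonneg (mul_pos hapos hbpos).le (mul_nonneg hApos.le hBpos.le),
      mul_nonneg (mul_pos hapos hbpos).le hApos.le]
  have hab : c ^ (p+q) = b * a := by
    rw [hb, ha, ← Real.rpow_add hcpos]
  have core : a*(1+A)*(1+b*B) ≤ Cf c * ((1+a*A)*(1+B)) := by
    rw [hC c, hab]
    nlinarith [K1, K2, K3]
  rw [hμ (c*s), hμ s, hxq, hxp]
  have hrhs : Cf c * (A * (1+B) / (1+A)) = (Cf c * (A*(1+B))) / (1+A) := by ring
  rw [hrhs, div_le_div_iff₀ (by positivity) (by positivity)]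
  calc a*A*(1+b*B)*(1+A) = A*(a*(1+A)*(1+b*B)) := by ring
  _ ≤ A*(Cf c*((1+a*A)*(1+B))) := mul_le_mul_of_nonneg_left core hApos.le
  _ = Cf c*(A*(1+B))*(1+a*A) := by ring
end
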